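/- For any real d ≥ 2, the set G = [−2dπ/(d+1), −2π/(d+1)) ∪ [2π/(d²−1), 2π/(d+1)) ∪ [2dπ/(d+1), 2d²π/(d²−1)) is a d-wavelet set: G is 2π-translation congruent to [0,2π) and {dⁿG : n ∈ ℤ} is a partition of ℝ∖{0} modulo null sets. -/
import Mathlib


open MeasureTheory Set Real

/-- Translation congruence modulo `2π`. -/
def TranslationCongruent (E F : Set ℝ) : Prop :=
  ∃ φ : ℝ → ℝ, Measurable φ ∧ Set.BijOn φ E F ∧ ∀ s ∈ E, ∃ k : ℤ, φ s = s + 2 * π * k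

/-- The three-interval set
`G = [−2dπ/(d+1), −2π/(d+1)) ∪ [2π/(d²−1), 2π/(d+1)) ∪ [2dπ/(d+1), 2d²π/(d²−1))`. -/
def Gset (d : ℝ) : Set ℝ :=
  Set.Ico (-(2 * d * π / (d + 1))) (-(2 * π / (d + 1))) ∪
    Set.Ico (2 * π / (d ^ 2 - 1)) (2 * π / (d + 1)) ∪
    Set.Ico (2 * d * π / (d + 1)) (2 * d ^ 2 * π / (d ^ 2 - 1))

lemma img_Ico (k p q : ℝ) (hk : 0 < k) :
    (fun s => k * s) '' Set.Ico p q = Set.Ico (k * p) (k * q) := by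
  ext x
  constructor
  · rintro ⟨s, ⟨h1, h2⟩, rfl⟩
    exact ⟨mul_le_mul_of_nonneg_left h1 hk.le, (mul_lt_mul_iff_right₀ hk).2 h2⟩
  · rintro ⟨h1, h2⟩
    refine ⟨x / k, ⟨(le_div_iff₀' hk).2 h1, (div_lt_iff₀' hk).2 h2⟩, ?_⟩
    field_simp

/-- Uniqueness of the dyadic-type ring containing a point, `Ico` version. -/
lemma ring_unique {d : ℝ} (hd1 : 1 < d) {c x : ℝ} (hc : 0 < c) {m n : ℤ}
    (h1 : d ^ m * c ≤ x) (h2 : x < d ^ m * (d * c))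
    (h3 : d ^ n * c ≤ x) (h4 : x < d ^ n * (d * c)) : m = n := by
  have hd0 : (0:ℝ) < d := by linarith
  by_contra hmn
  rcases Ne.lt_or_gt hmn with h | h
  · have e : d ^ m * (d * c) = d ^ (m + 1) * c := by
      rw [zpow_add_one₀ (ne_of_gt hd0)]; ring
    have h5 : d ^ (m + 1) ≤ d ^ n := zpow_le_zpow_right₀ hd1.le (by omega)
    have h6 : d ^ (m + 1) * c ≤ d ^ n * c := mul_le_mul_of_nonneg_right h5 hc.le
    rw [e] at h2; linarith
  · have e : d ^ n * (d * c) = d ^ (n + 1) * c := by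
      rw [zpow_add_one₀ (ne_of_gt hd0)]; ring
    have h5 : d ^ (n + 1) ≤ d ^ m := zpow_le_zpow_right₀ hd1.le (by omega)
    have h6 : d ^ (n + 1) * c ≤ d ^ m * c := mul_le_mul_of_nonneg_right h5 hc.le
    rw [e] at h4; linarith

/-- Uniqueness of the dyadic-type ring containing a point, `Ioc` version. -/
lemma ring_unique' {d : ℝ} (hd1 : 1 < d) {c x : ℝ} (hc : 0 < c) {m n : ℤ}
    (h1 : d ^ m * c < x) (h2 : x ≤ d ^ m * (d * c))
    (h3 : d ^ n * c < x) (h4 : x ≤ d ^ n * (d * c)) : m = n := by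
  have hd0 : (0:ℝ) < d := by linarith
  by_contra hmn
  rcases Ne.lt_or_gt hmn with h | h
  · have e : d ^ m * (d * c) = d ^ (m + 1) * c := by
      rw [zpow_add_one₀ (ne_of_gt hd0)]; ring
    have h5 : d ^ (m + 1) ≤ d ^ n := zpow_le_zpow_right₀ hd1.le (by omega)
    have h6 : d ^ (m + 1) * c ≤ d ^ n * c := mul_le_mul_of_nonneg_right h5 hc.le
    rw [e] at h2; linarith
  · have e : d ^ n * (d * c) = d ^ (n + 1) * c := by
      rw [zpow_add_one₀ (ne_of_gt hd0)]; ring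
    have h5 : d ^ (n + 1) ≤ d ^ m := zpow_le_zpow_right₀ hd1.le (by omega)
    have h6 : d ^ (n + 1) * c ≤ d ^ m * c := mul_le_mul_of_nonneg_right h5 hc.le
    rw [e] at h4; linarith

set_option maxHeartbeats 1000000 in
/-- For any real `d ≥ 2`, the set `Gset d` is a `d`-wavelet set: it is `2π`-translation
congruent to `[0,2π)` and its dilates `dⁿG` form a partition of `ℝ∖{0}` modulo null sets. -/
theorem stmt_16 (d : ℝ) (hd : 2 ≤ d) :
    TranslationCongruent (Gset d) (Set.Ico 0 (2 * π)) ∧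
    (∀ m n : ℤ, m ≠ n →
        AEDisjoint volume ((fun s => d ^ m * s) '' Gset d) ((fun s => d ^ n * s) '' Gset d)) ∧
    volume (symmDiff ({(0 : ℝ)}ᶜ) (⋃ n : ℤ, (fun s => d ^ n * s) '' Gset d)) = 0 := by
  have hπ := Real.pi_pos
  have hd1 : (1:ℝ) < d := by linarith
  have hd0 : (0:ℝ) < d := by linarith
  have hdp : (0:ℝ) < d + 1 := by linarith
  have hds : (0:ℝ) < d ^ 2 - 1 := by nlinarith
  have hne1 : d + 1 ≠ 0 := ne_of_gt hdp
  have hne2 : d ^ 2 - 1 ≠ 0 := ne_of_gt hds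
  obtain ⟨a, ha_def⟩ : ∃ a : ℝ, a = 2 * π / (d ^ 2 - 1) := ⟨_, rfl⟩
  obtain ⟨u, hu_def⟩ : ∃ u : ℝ, u = (d - 1) * a := ⟨_, rfl⟩
  have ha : 0 < a := by rw [ha_def]; positivity
  have hu : 0 < u := by rw [hu_def]; exact mul_pos (by linarith) ha
  have hau : a ≤ u := by rw [hu_def]; nlinarith
  have hud : u ≤ d * u := by nlinarith
  have hua : u + a = d * a := by rw [hu_def]; ring
  have hu_da : u ≤ d * a := by linarith
  have hsum : u + d * u = 2 * π := by
    rw [hu_def, ha_def]; field_simp; ring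
  have hda2 : d * (d * a) = 2 * π + a := by
    rw [ha_def]; field_simp; ring
  have hdu_pos : 0 < d * u := mul_pos hd0 hu
  have hG : Gset d = Set.Ico (-(d * u)) (-u) ∪ Set.Ico a u ∪
      Set.Ico (d * u) (d * (d * a)) := by
    have e1 : 2 * π / (d + 1) = u := by
      rw [hu_def, ha_def]; field_simp; ring
    have e2 : 2 * d * π / (d + 1) = d * u := by
      rw [hu_def, ha_def]; field_simp; ring
    have e3 : 2 * d ^ 2 * π / (d ^ 2 - 1) = d * (d * a) := by
      rw [ha_def]; field_simp
    rw [Gset, e1, e2, e3, ← ha_def]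
  have hzp : ∀ k : ℤ, d ^ (k + 1) = d ^ k * d := fun k => zpow_add_one₀ (ne_of_gt hd0) k
  have himg : ∀ m : ℤ, (fun s => d ^ m * s) '' Gset d =
      Set.Ico (-(d ^ m * (d * u))) (-(d ^ m * u)) ∪ Set.Ico (d ^ m * a) (d ^ m * u) ∪
        Set.Ico (d ^ m * (d * u)) (d ^ m * (d * (d * a))) := by
    intro m
    rw [hG, Set.image_union, Set.image_union, img_Ico _ _ _ (zpow_pos hd0 m),
      img_Ico _ _ _ (zpow_pos hd0 m), img_Ico _ _ _ (zpow_pos hd0 m), mul_neg, mul_neg]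
  refine ⟨?_, ?_, ?_⟩
  · -- translation congruence
    refine ⟨fun s => if s < 0 then s + 2 * π else if s < 2 * π then s else s - 2 * π,
      ?_, ?_, ?_⟩
    · exact Measurable.ite measurableSet_Iio (by fun_prop)
        (Measurable.ite measurableSet_Iio (by fun_prop) (by fun_prop))
    · apply Set.InvOn.bijOn
        (f' := fun t => if t < a then t + 2 * π else if t < u then t
          else if t < d * u then t - 2 * π else t)
      · constructor
        · intro s hs
          rw [hG] at hs
          simp only [Set.mem_union, Set.mem_Ico] at hs
          rcases hs with (⟨l, r⟩ | ⟨l, r⟩) | ⟨l, r⟩ <;> dsimp only <;> split_ifs <;> linarith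
        · intro t ht
          simp only [Set.mem_Ico] at ht
          obtain ⟨l, r⟩ := ht
          dsimp only
          split_ifs <;> linarith
      · intro s hs
        rw [hG] at hs
        simp only [Set.mem_union, Set.mem_Ico] at hs
        simp only [Set.mem_Ico]
        rcases hs with (⟨l, r⟩ | ⟨l, r⟩) | ⟨l, r⟩ <;> split_ifs <;> constructor <;> linarith
      · intro t ht
        simp only [Set.mem_Ico] at ht
        obtain ⟨l, r⟩ := ht
        rw [hG]
        simp only [Set.mem_union, Set.mem_Ico]
        split_ifs with h1 h2 h3
        · exact Or.inr ⟨by linarith, by linarith⟩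
        · exact Or.inl (Or.inr ⟨by linarith, by linarith⟩)
        · exact Or.inl (Or.inl ⟨by linarith, by linarith⟩)
        · exact Or.inr ⟨by linarith, by linarith⟩
    · intro s _
      dsimp only
      split_ifs
      · exact ⟨1, by push_cast; ring⟩
      · exact ⟨0, by push_cast; ring⟩
      · exact ⟨-1, by push_cast; ring⟩
  · -- disjointness
    intro m n hmn
    apply Disjoint.aedisjoint
    rw [Set.disjoint_left]
    intro x hxm hxn
    rw [himg m] at hxm
    rw [himg n] at hxn
    simp only [Set.mem_union, Set.mem_Ico] at hxm hxn
    have hpm := zpow_pos hd0 m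
    have hpn := zpow_pos hd0 n
    have q1 : 0 < d ^ m * u := mul_pos hpm hu
    have q2 : 0 < d ^ n * u := mul_pos hpn hu
    have q3 : 0 < d ^ m * a := mul_pos hpm ha
    have q4 : 0 < d ^ n * a := mul_pos hpn ha
    have q5 : 0 < d ^ m * (d * u) := mul_pos hpm hdu_pos
    have q6 : 0 < d ^ n * (d * u) := mul_pos hpn hdu_pos
    have hCl : ∀ k : ℤ, d ^ k * (d * u) = d ^ (k + 1) * u := by
      intro k; rw [hzp]; ring
    have hCr : ∀ k : ℤ, d ^ k * (d * (d * a)) = d ^ (k + 1) * (d * a) := by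
      intro k; rw [hzp]; ring
    rcases hxm with (⟨l1, r1⟩ | ⟨l1, r1⟩) | ⟨l1, r1⟩ <;>
      rcases hxn with (⟨l2, r2⟩ | ⟨l2, r2⟩) | ⟨l2, r2⟩
    · exact hmn (ring_unique' (x := -x) hd1 hu (by linarith) (by linarith)
        (by linarith) (by linarith))
    · linarith
    · linarith
    · linarith
    · refine hmn (ring_unique hd1 ha l1 ?_ l2 ?_)
      · exact lt_of_lt_of_le r1 (mul_le_mul_of_nonneg_left hu_da hpm.le)
      · exact lt_of_lt_of_le r2 (mul_le_mul_of_nonneg_left hu_da hpn.le)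
    · -- m in B-part, n in C-part
      rw [hCl n] at l2
      rw [hCr n] at r2
      have l2' : d ^ (n + 1) * a ≤ x :=
        le_trans (mul_le_mul_of_nonneg_left hau (zpow_pos hd0 (n + 1)).le) l2
      have r1' : x < d ^ m * (d * a) :=
        lt_of_lt_of_le r1 (mul_le_mul_of_nonneg_left hu_da hpm.le)
      have hm : m = n + 1 := ring_unique hd1 ha l1 r1' l2' r2
      subst hm
      linarith
    · linarith
    · rw [hCl m] at l1
      rw [hCr m] at r1
      have l1' : d ^ (m + 1) * a ≤ x :=
        le_trans (mul_le_mul_of_nonneg_left hau (zpow_pos hd0 (m + 1)).le) l1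
      have r2' : x < d ^ n * (d * a) :=
        lt_of_lt_of_le r2 (mul_le_mul_of_nonneg_left hu_da hpn.le)
      have hn : n = m + 1 := ring_unique hd1 ha l2 r2' l1' r1
      subst hn
      linarith
    · rw [hCl m] at l1
      rw [hCr m] at r1
      rw [hCl n] at l2
      rw [hCr n] at r2
      have l1' : d ^ (m + 1) * a ≤ x :=
        le_trans (mul_le_mul_of_nonneg_left hau (zpow_pos hd0 (m + 1)).le) l1
      have l2' : d ^ (n + 1) * a ≤ x :=
        le_trans (mul_le_mul_of_nonneg_left hau (zpow_pos hd0 (n + 1)).le) l2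
      have : m + 1 = n + 1 := ring_unique hd1 ha l1' r1 l2' r2
      exact hmn (by omega)
  · -- union is ℝ ∖ {0}
    have hUnion : (⋃ n : ℤ, (fun s => d ^ n * s) '' Gset d) = {(0 : ℝ)}ᶜ := by
      ext x
      simp only [Set.mem_iUnion, Set.mem_compl_iff, Set.mem_singleton_iff]
      constructor
      · rintro ⟨n, s, hs, rfl⟩
        have hs0 : s ≠ 0 := by
          rw [hG] at hs
          simp only [Set.mem_union, Set.mem_Ico] at hs
          rcases hs with (⟨l, r⟩ | ⟨l, r⟩) | ⟨l, r⟩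
          · exact ne_of_lt (by linarith)
          · exact ne_of_gt (by linarith)
          · exact ne_of_gt (by linarith)
        exact mul_ne_zero (ne_of_gt (zpow_pos hd0 n)) hs0
      · intro hx
        rcases Ne.lt_or_gt hx with hneg | hpos
        · obtain ⟨k, hk1, hk2⟩ := exists_mem_Ioc_zpow (x := -x / u) (div_pos (by linarith) hu) hd1
          have hp := zpow_pos hd0 k
          have b1 : d ^ k * u < -x := by
            have := (lt_div_iff₀ hu).1 hk1
            linarith
          have b2 : -x ≤ d ^ (k + 1) * u := by
            have := (div_le_iff₀ hu).1 hk2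
            linarith
          rw [hzp] at b2
          refine ⟨k, x / d ^ k, ?_, by field_simp⟩
          rw [hG]
          simp only [Set.mem_union, Set.mem_Ico]
          left; left
          constructor
          · rw [le_div_iff₀ hp]
            nlinarith
          · rw [div_lt_iff₀ hp]
            nlinarith
        · obtain ⟨k, hk1, hk2⟩ := exists_mem_Ico_zpow (x := x / a) (div_pos hpos ha) hd1
          have b1 : d ^ k * a ≤ x := by
            have := (le_div_iff₀ ha).1 hk1
            linarith
          have b2 : x < d ^ (k + 1) * a := by
            have := (div_lt_iff₀ ha).1 hk2
            linarith
          rw [hzp] at b2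
          by_cases hc : x < d ^ k * u
          · refine ⟨k, x / d ^ k, ?_, by field_simp⟩
            rw [hG]
            simp only [Set.mem_union, Set.mem_Ico]
            left; right
            have hp := zpow_pos hd0 k
            exact ⟨(le_div_iff₀ hp).2 (by linarith), (div_lt_iff₀ hp).2 (by linarith)⟩
          · push_neg at hc
            refine ⟨k - 1, x / d ^ (k - 1), ?_, by field_simp⟩
            rw [hG]
            simp only [Set.mem_union, Set.mem_Ico]
            right
            have hp := zpow_pos hd0 (k - 1)
            have e : d ^ k = d ^ (k - 1) * d := by
              rw [← zpow_add_one₀ (ne_of_gt hd0)]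
              norm_num
            rw [e] at hc b2
            exact ⟨(le_div_iff₀ hp).2 (by nlinarith), (div_lt_iff₀ hp).2 (by nlinarith)⟩
    rw [hUnion, symmDiff_self]
    simp
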